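/- For every integer n ≥ 1, every ξ > 0 and every θ₀ ∈ ℝ, the curve 𝐔₀ᵉ(T) = (𝒰₀ᵉ(T), 𝒱₀ᵉ(T), d𝒰₀ᵉ/dT(T), d𝒱₀ᵉ/dT(T)), where 𝒰₀ᵉ(T) = cos(θ₀ − t(T)/2)·sin(nT), 𝒱₀ᵉ(T) = sin(θ₀ − t(T)/2)·sin(nT) and t(T) = 2[T − cos(nT)sin(nT)/n]·ξ³, is the solution of the unperturbed system 𝐔' = F₀(𝐔) with initial condition 𝐔₀ᵉ(0) = (0, 0, n·cos θ₀, n·sin θ₀); that is, 𝒰₀ᵉ and 𝒱₀ᵉ satisfy d²𝒰₀ᵉ/dT² = −n²𝒰₀ᵉ + 8(𝒰₀ᵉ²+𝒱₀ᵉ²)(d𝒱₀ᵉ/dT)ξ³ + 12(𝒰₀ᵉ²+𝒱₀ᵉ²)²𝒰₀ᵉξ⁶ and d²𝒱₀ᵉ/dT² = −n²𝒱₀ᵉ − 8(𝒰₀ᵉ²+𝒱₀ᵉ²)(d𝒰₀ᵉ/dT)ξ³ + 12(𝒰₀ᵉ²+𝒱₀ᵉ²)²𝒱₀ᵉξ⁶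 for all T ∈ ℝ. -/

import Mathlib

open Real Set

noncomputable section

/-- The sidereal time `t(T) = 2[T − cos(nT)sin(nT)/n]ξ³`. -/
def tOf (n : ℕ) (ξ : ℝ) (T : ℝ) : ℝ :=
  2*(T - Real.cos ((n:ℝ)*T)*Real.sin ((n:ℝ)*T)/(n:ℝ))*ξ^3

/-- The first component `𝒰₀ᵉ(T) = cos(θ₀ − t(T)/2)·sin(nT)` of the unperturbed
ejection solution. -/
def U0e (n : ℕ) (ξ θ₀ : ℝ) (T : ℝ) : ℝ :=
  Real.cos (θ₀ - tOf n ξ T/2) * Real.sin ((n:ℝ)*T)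

/-- The second component `𝒱₀ᵉ(T) = sin(θ₀ − t(T)/2)·sin(nT)` of the unperturbed
ejection solution. -/
def V0e (n : ℕ) (ξ θ₀ : ℝ) (T : ℝ) : ℝ :=
  Real.sin (θ₀ - tOf n ξ T/2) * Real.sin ((n:ℝ)*T)

/-! Write `𝒰 + i𝒱 = e^{iφ} s` with radius `s = sin (nT)` and phase `φ = θ₀ − t/2`. Since
`𝒰² + 𝒱² = s²`, both equations of the system follow from `s'' = −n² s` together with
`φ' = −2ξ³s²`, and the latter is exactly what the choice of `t` provides: `t' = 4ξ³ sin² (nT)`. -/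

namespace PolarCurve

variable {φ s s' U V : ℝ → ℝ} {k ξ : ℝ}
  (hU : ∀ T, U T = cos (φ T) * s T) (hV : ∀ T, V T = sin (φ T) * s T)

include hU hV in
theorem sq_add_sq (T : ℝ) : U T ^ 2 + V T ^ 2 = s T ^ 2 := by
  rw [hU, hV]
  linear_combination s T ^ 2 * cos_sq_add_sin_sq (φ T)

variable (hφ : ∀ T, HasDerivAt φ (-2 * s T ^ 2 * ξ ^ 3) T) (hs : ∀ T, HasDerivAt s (s' T) T)
  (hs' : ∀ T, HasDerivAt s' (-k * s T) T)

include hU hφ hs in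
theorem deriv_fst :
    deriv U = fun T => 2 * sin (φ T) * s T ^ 3 * ξ ^ 3 + cos (φ T) * s' T := by
  obtain rfl : U = _ := funext hU
  exact funext fun T => (((hφ T).cos.mul (hs T)).congr_deriv (by ring)).deriv

include hV hφ hs in
theorem deriv_snd :
    deriv V = fun T => -2 * cos (φ T) * s T ^ 3 * ξ ^ 3 + sin (φ T) * s' T := by
  obtain rfl : V = _ := funext hV
  exact funext fun T => (((hφ T).sin.mul (hs T)).congr_deriv (by ring)).deriv

include hU hV hφ hs hs' in
theorem deriv_deriv_fst (T : ℝ) :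
    deriv (deriv U) T = -k * U T + 8 * (U T ^ 2 + V T ^ 2) * deriv V T * ξ ^ 3
      + 12 * (U T ^ 2 + V T ^ 2) ^ 2 * U T * ξ ^ 6 := by
  have h := ((((hφ T).sin.const_mul 2).fun_mul ((hs T).fun_pow 3)).mul_const (ξ ^ 3)).fun_add
    ((hφ T).cos.fun_mul (hs' T))
  rw [deriv_fst hU hφ hs, deriv_snd hV hφ hs, h.deriv, sq_add_sq hU hV, hU]
  ring

include hU hV hφ hs hs' in
theorem deriv_deriv_snd (T : ℝ) :
    deriv (deriv V) T = -k * V T - 8 * (U T ^ 2 + V T ^ 2) * deriv U T * ξ ^ 3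
      + 12 * (U T ^ 2 + V T ^ 2) ^ 2 * V T * ξ ^ 6 := by
  have h := ((((hφ T).cos.const_mul (-2)).fun_mul ((hs T).fun_pow 3)).mul_const (ξ ^ 3)).fun_add
    ((hφ T).sin.fun_mul (hs' T))
  rw [deriv_fst hU hφ hs, deriv_snd hV hφ hs, h.deriv, sq_add_sq hU hV, hV]
  ring

end PolarCurve

theorem hasDerivAt_sin_const_mul (a T : ℝ) :
    HasDerivAt (fun T => sin (a * T)) (a * cos (a * T)) T :=
  ((hasDerivAt_id' T).const_mul a).sin.congr_deriv (by ring)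

theorem hasDerivAt_cos_const_mul (a T : ℝ) :
    HasDerivAt (fun T => cos (a * T)) (-a * sin (a * T)) T :=
  ((hasDerivAt_id' T).const_mul a).cos.congr_deriv (by ring)

theorem hasDerivAt_tOf {n : ℕ} (hn : (n : ℝ) ≠ 0) (ξ T : ℝ) :
    HasDerivAt (tOf n ξ) (4 * sin (n * T) ^ 2 * ξ ^ 3) T := by
  have h := (((hasDerivAt_id' T).sub (((hasDerivAt_cos_const_mul n T).fun_mul
    (hasDerivAt_sin_const_mul n T)).div_const n)).const_mul 2).mul_const (ξ ^ 3)
  refine h.congr_deriv ?_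
  field_simp
  linear_combination -2 * ξ ^ 3 * sin_sq_add_cos_sq ((n : ℝ) * T)

theorem hasDerivAt_ejectionPhase {n : ℕ} (hn : (n : ℝ) ≠ 0) (ξ θ₀ T : ℝ) :
    HasDerivAt (fun T => θ₀ - tOf n ξ T / 2) (-2 * sin (n * T) ^ 2 * ξ ^ 3) T :=
  ((hasDerivAt_tOf hn ξ T).div_const 2).const_sub θ₀ |>.congr_deriv (by ring)

theorem unperturbed_ejection_solution_general (n : ℕ) (hn : 1 ≤ n) (ξ : ℝ) (θ₀ : ℝ) :
    U0e n ξ θ₀ 0 = 0 ∧ V0e n ξ θ₀ 0 = 0 ∧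
    deriv (U0e n ξ θ₀) 0 = (n:ℝ) * Real.cos θ₀ ∧
    deriv (V0e n ξ θ₀) 0 = (n:ℝ) * Real.sin θ₀ ∧
    (∀ T : ℝ,
      deriv (deriv (U0e n ξ θ₀)) T =
        -(n:ℝ)^2 * U0e n ξ θ₀ T
        + 8*((U0e n ξ θ₀ T)^2 + (V0e n ξ θ₀ T)^2)*(deriv (V0e n ξ θ₀) T)*ξ^3
        + 12*((U0e n ξ θ₀ T)^2 + (V0e n ξ θ₀ T)^2)^2*(U0e n ξ θ₀ T)*ξ^6) ∧
    (∀ T : ℝ,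
      deriv (deriv (V0e n ξ θ₀)) T =
        -(n:ℝ)^2 * V0e n ξ θ₀ T
        - 8*((U0e n ξ θ₀ T)^2 + (V0e n ξ θ₀ T)^2)*(deriv (U0e n ξ θ₀) T)*ξ^3
        + 12*((U0e n ξ θ₀ T)^2 + (V0e n ξ θ₀ T)^2)^2*(V0e n ξ θ₀ T)*ξ^6) := by
  have hn0 : (n : ℝ) ≠ 0 := Nat.cast_ne_zero.mpr (by omega)
  have hφ := hasDerivAt_ejectionPhase hn0 ξ θ₀
  have hs := hasDerivAt_sin_const_mul n
  have hs' (T : ℝ) : HasDerivAt (fun T => n * cos (n * T)) (-n ^ 2 * sin (n * T)) T :=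
    ((hasDerivAt_cos_const_mul n T).const_mul (n : ℝ)).congr_deriv (by ring)
  have hU (T : ℝ) : U0e n ξ θ₀ T = cos (θ₀ - tOf n ξ T / 2) * sin (n * T) := rfl
  have hV (T : ℝ) : V0e n ξ θ₀ T = sin (θ₀ - tOf n ξ T / 2) * sin (n * T) := rfl
  refine ⟨by simp [U0e], by simp [V0e], ?_, ?_, PolarCurve.deriv_deriv_fst hU hV hφ hs hs',
    PolarCurve.deriv_deriv_snd hU hV hφ hs hs'⟩
  · simp [PolarCurve.deriv_fst hU hφ hs, tOf, mul_comm]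
  · simp [PolarCurve.deriv_snd hV hφ hs, tOf, mul_comm]

/-- The curve `𝐔₀ᵉ = (𝒰₀ᵉ, 𝒱₀ᵉ, d𝒰₀ᵉ/dT, d𝒱₀ᵉ/dT)` is the solution of the unperturbed
system `𝐔' = F₀(𝐔)` with initial condition `(0, 0, n cos θ₀, n sin θ₀)`. -/
theorem unperturbed_ejection_solution (n : ℕ) (hn : 1 ≤ n) (ξ : ℝ) (hξ : 0 < ξ)
    (θ₀ : ℝ) :
    U0e n ξ θ₀ 0 = 0 ∧ V0e n ξ θ₀ 0 = 0 ∧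
    deriv (U0e n ξ θ₀) 0 = (n:ℝ) * Real.cos θ₀ ∧
    deriv (V0e n ξ θ₀) 0 = (n:ℝ) * Real.sin θ₀ ∧
    (∀ T : ℝ,
      deriv (deriv (U0e n ξ θ₀)) T =
        -(n:ℝ)^2 * U0e n ξ θ₀ T
        + 8*((U0e n ξ θ₀ T)^2 + (V0e n ξ θ₀ T)^2)*(deriv (V0e n ξ θ₀) T)*ξ^3
        + 12*((U0e n ξ θ₀ T)^2 + (V0e n ξ θ₀ T)^2)^2*(U0e n ξ θ₀ T)*ξ^6) ∧
    (∀ T : ℝ,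
      deriv (deriv (V0e n ξ θ₀)) T =
        -(n:ℝ)^2 * V0e n ξ θ₀ T
        - 8*((U0e n ξ θ₀ T)^2 + (V0e n ξ θ₀ T)^2)*(deriv (U0e n ξ θ₀) T)*ξ^3
        + 12*((U0e n ξ θ₀ T)^2 + (V0e n ξ θ₀ T)^2)^2*(V0e n ξ θ₀ T)*ξ^6) :=
  unperturbed_ejection_solution_general n hn ξ θ₀

end
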